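/- arXiv:2604.20265 — 5 statements merged into one kernel-verified Lean document; each statement's English description precedes it below -/
import Mathlib

section
/- Under the hypotheses of the previous statement (v : ℝ × E → E and ρ : ℝ × E → ℝ continuously differentiable with ∂ₜρ + v·∇ₓρ + ρ div v = 0 everywhere, and y : ℝ → E an integral curve of v), if ρ(0, y 0) > 0 then ρ(t, y t) > 0 for all t. (Positivity of the density is propagated along characteristics, as asserted in the proof of Proposition 3.1.) -/
open scoped RealInnerProductSpace

/-- Positivity of the density is propagated along characteristics: if
`∂ₜρ + ⟪v, ∇ₓρ⟫ + ρ · div v = 0`, `y` is an integral curve of `v`, and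
`ρ(0, y 0) > 0`, then `ρ(t, y t) > 0` for all `t`. -/
theorem density_positivity_along_characteristics
    (v : ℝ × EuclideanSpace ℝ (Fin 3) → EuclideanSpace ℝ (Fin 3))
    (ρ : ℝ × EuclideanSpace ℝ (Fin 3) → ℝ)
    (hv : ContDiff ℝ 1 v) (hρ : ContDiff ℝ 1 ρ)
    (heq : ∀ (t : ℝ) (x : EuclideanSpace ℝ (Fin 3)),
      fderiv ℝ ρ (t, x) (1, 0)
        + ⟪v (t, x), gradient (fun y => ρ (t, y)) x⟫
        + ρ (t, x) * ∑ i : Fin 3,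
            ⟪(fderiv ℝ (fun y => v (t, y)) x) (EuclideanSpace.single i 1),
              EuclideanSpace.single i 1⟫ = 0)
    (y : ℝ → EuclideanSpace ℝ (Fin 3))
    (hy : ∀ t, HasDerivAt y (v (t, y t)) t)
    (hpos : 0 < ρ (0, y 0)) :
    ∀ t, 0 < ρ (t, y t) := by
  have hvd : Differentiable ℝ v := hv.differentiable one_ne_zero
  have hρd : Differentiable ℝ ρ := hρ.differentiable one_ne_zero
  have hyc : Continuous y := continuous_iff_continuousAt.mpr fun t => (hy t).continuousAt
  set g : ℝ → ℝ := fun t => ∑ i : Fin 3,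
      ⟪(fderiv ℝ (fun x => v (t, x)) (y t)) (EuclideanSpace.single i 1),
        EuclideanSpace.single i 1⟫ with hg
  set f : ℝ → ℝ := fun t => ρ (t, y t) with hf
  -- partial derivative of v
  have hpart : ∀ (t : ℝ) (x : EuclideanSpace ℝ (Fin 3)),
      fderiv ℝ (fun x => v (t, x)) x
        = (fderiv ℝ v (t, x)).comp (ContinuousLinearMap.inr ℝ ℝ _) := by
    intro t x
    exact ((hvd (t, x)).hasFDerivAt.comp x (hasFDerivAt_prodMk_right t x)).fderiv
  -- continuity of g
  have hgc : Continuous g := by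
    have h1 : Continuous (fun t : ℝ => fderiv ℝ v (t, y t)) :=
      (hv.continuous_fderiv one_ne_zero).comp (continuous_id.prodMk hyc)
    have : g = fun t => ∑ i : Fin 3,
        ⟪(fderiv ℝ v (t, y t)) ((0 : ℝ), EuclideanSpace.single i 1),
          EuclideanSpace.single i 1⟫ := by
      funext t
      simp [hg, hpart t (y t)]
    rw [this]
    exact continuous_finset_sum _ fun i _ =>
      ((h1.clm_apply continuous_const).inner continuous_const)
  -- f has derivative -(f t * g t)
  have hfd : ∀ t, HasDerivAt f (-(f t * g t)) t := by
    intro t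
    have hc : HasDerivAt (fun s : ℝ => ((s, y s) : ℝ × EuclideanSpace ℝ (Fin 3)))
        ((1 : ℝ), v (t, y t)) t := (hasDerivAt_id t).prodMk (hy t)
    have h2 : HasDerivAt f (fderiv ℝ ρ (t, y t) (1, v (t, y t))) t := by
      have := (hρd (t, y t)).hasFDerivAt.comp_hasDerivAt t hc
      exact this
    convert h2 using 1
    -- compute the derivative value from heq
    have hsplit : fderiv ℝ ρ (t, y t) (1, v (t, y t))
        = fderiv ℝ ρ (t, y t) (1, 0) + fderiv ℝ ρ (t, y t) (0, v (t, y t)) := by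
      rw [← ContinuousLinearMap.map_add]
      norm_num
    have hgradρ : ⟪v (t, y t), gradient (fun x => ρ (t, x)) (y t)⟫
        = fderiv ℝ ρ (t, y t) (0, v (t, y t)) := by
      rw [real_inner_comm]
      have : gradient (fun x => ρ (t, x)) (y t)
          = (InnerProductSpace.toDual ℝ _).symm (fderiv ℝ (fun x => ρ (t, x)) (y t)) := rfl
      rw [this, InnerProductSpace.toDual_symm_apply]
      have hp : fderiv ℝ (fun x => ρ (t, x)) (y t)
          = (fderiv ℝ ρ (t, y t)).comp (ContinuousLinearMap.inr ℝ ℝ _) :=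
        ((hρd (t, y t)).hasFDerivAt.comp (y t) (hasFDerivAt_prodMk_right t (y t))).fderiv
      rw [hp]; rfl
    have h3 := heq t (y t)
    rw [← hgradρ] at hsplit
    rw [hsplit]
    have : g t = ∑ i : Fin 3,
        ⟪(fderiv ℝ (fun x => v (t, x)) (y t)) (EuclideanSpace.single i 1),
          EuclideanSpace.single i 1⟫ := rfl
    simp only [hf, this]
    linarith [h3]
  -- the exponential integrating factor
  set G : ℝ → ℝ := fun t => ∫ s in (0:ℝ)..t, g s with hG
  have hGd : ∀ t, HasDerivAt G (g t) t := fun t =>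
    intervalIntegral.integral_hasDerivAt_right (hgc.intervalIntegrable 0 t)
      (hgc.stronglyMeasurableAtFilter _ _) hgc.continuousAt
  set h : ℝ → ℝ := fun t => f t * Real.exp (G t) with hh
  have hhd : ∀ t, HasDerivAt h 0 t := by
    intro t
    have : HasDerivAt (fun s => f s * Real.exp (G s)) _ t := (hfd t).mul ((hGd t).exp)
    convert this using 1
    ring
  have hconst : ∀ t, h t = h 0 := by
    intro t
    exact is_const_of_deriv_eq_zero (fun s => (hhd s).differentiableAt) (fun s => (hhd s).deriv) t 0
  intro t
  have h0 : h 0 = f 0 := by simp [hh, hG, hf]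
  have ht : f t * Real.exp (G t) = f 0 := by rw [← h0, ← hconst t]
  have hf0 : 0 < f 0 := hpos
  nlinarith [Real.exp_pos (G t), ht, hf0]
end

section
/- Let v : ℝ × E → E and ρ : ℝ × E → ℝ be continuously differentiable with ∂ₜρ + ⟪v, ∇ₓρ⟫ + ρ · div v = 0 everywhere (E = EuclideanSpace ℝ (Fin 3)), let y : ℝ → E satisfy HasDerivAt y (v (t, y t)) t for all t, and let F : ℝ → Matrix (Fin 3) (Fin 3) ℝ satisfy HasDerivAt F (Jv(t, y t) * F t) t for all t, where Jv(t,x)ᵢⱼ = ∂_{xⱼ} vᵢ(t,x) is the spatial Jacobian of v. Then the function t ↦ ρ(t, y t) · det (F t) is constant; in particular, if ρ(0, y 0) · det (F 0) = 1 then ρ(t, y t) · det (F t) = 1 for all t. (The compatibility condition ρ det F = 1 is propagated in time, which the paper uses, starting from ρ₀ det F₀ = 1, to deduce nondegeneracy of the deformation gradient.) -/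
open scoped RealInnerProductSpace Matrix.Norms.L2Operator

/-- Jacobi's formula for `3 × 3` matrices along a solution of `F' = J F`. -/
lemma jacobi3 {F : ℝ → Matrix (Fin 3) (Fin 3) ℝ} {J : Matrix (Fin 3) (Fin 3) ℝ} {t : ℝ}
    (h : HasDerivAt F (J * F t) t) :
    HasDerivAt (fun s => (F s).det) (J.trace * (F t).det) t := by
  have e : ∀ i j : Fin 3, HasDerivAt (fun s => F s i j) ((J * F t) i j) t := by
    intro i j
    let L : Matrix (Fin 3) (Fin 3) ℝ →L[ℝ] ℝ :=
      LinearMap.toContinuousLinearMap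
        { toFun := fun M => M i j
          map_add' := fun _ _ => rfl
          map_smul' := fun _ _ => rfl }
    exact L.hasFDerivAt.comp_hasDerivAt t h
  have H := (((((((e 0 0).mul (e 1 1)).mul (e 2 2)).sub
      (((e 0 0).mul (e 1 2)).mul (e 2 1))).sub
      (((e 0 1).mul (e 1 0)).mul (e 2 2))).add
      (((e 0 1).mul (e 1 2)).mul (e 2 0))).add
      (((e 0 2).mul (e 1 0)).mul (e 2 1))).sub
      (((e 0 2).mul (e 1 1)).mul (e 2 0))
  have hfun : (fun s => (F s).det) = fun s =>
      F s 0 0 * F s 1 1 * F s 2 2 - F s 0 0 * F s 1 2 * F s 2 1 -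
        F s 0 1 * F s 1 0 * F s 2 2 + F s 0 1 * F s 1 2 * F s 2 0 +
        F s 0 2 * F s 1 0 * F s 2 1 - F s 0 2 * F s 1 1 * F s 2 0 :=
    funext fun s => Matrix.det_fin_three (F s)
  rw [hfun]
  refine H.congr_deriv ?_
  simp only [Matrix.mul_apply, Matrix.trace, Matrix.diag, Matrix.det_fin_three,
    Fin.sum_univ_three, Pi.mul_apply]
  ring

/-- The compatibility condition `ρ det F = 1` is propagated in time: along a
characteristic `y` of `v`, if `F' = (∇v)F`, then `t ↦ ρ(t, y t) · det (F t)` is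
constant; in particular it stays equal to `1` if it is so initially. -/
theorem rho_det_F_constant
    (v : ℝ × EuclideanSpace ℝ (Fin 3) → EuclideanSpace ℝ (Fin 3))
    (ρ : ℝ × EuclideanSpace ℝ (Fin 3) → ℝ)
    (hv : ContDiff ℝ 1 v) (hρ : ContDiff ℝ 1 ρ)
    (heq : ∀ (t : ℝ) (x : EuclideanSpace ℝ (Fin 3)),
      fderiv ℝ ρ (t, x) (1, 0)
        + ⟪v (t, x), gradient (fun y => ρ (t, y)) x⟫
        + ρ (t, x) * ∑ i : Fin 3,
            ⟪(fderiv ℝ (fun y => v (t, y)) x) (EuclideanSpace.single i 1),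
              EuclideanSpace.single i 1⟫ = 0)
    (y : ℝ → EuclideanSpace ℝ (Fin 3))
    (hy : ∀ t, HasDerivAt y (v (t, y t)) t)
    (F : ℝ → Matrix (Fin 3) (Fin 3) ℝ)
    (hF : ∀ t, HasDerivAt F
      ((Matrix.of fun i j =>
        (fderiv ℝ (fun x => v (t, x)) (y t)) (EuclideanSpace.single j 1) i) * F t) t) :
    (∀ t, ρ (t, y t) * (F t).det = ρ (0, y 0) * (F 0).det) ∧
      (ρ (0, y 0) * (F 0).det = 1 → ∀ t, ρ (t, y t) * (F t).det = 1) := by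
  set g : ℝ → ℝ := fun t => ρ (t, y t) * (F t).det with hg
  have key : ∀ t, HasDerivAt g 0 t := by
    intro t
    set J : Matrix (Fin 3) (Fin 3) ℝ := Matrix.of fun i j =>
      (fderiv ℝ (fun x => v (t, x)) (y t)) (EuclideanSpace.single j 1) i with hJ
    -- derivative of ρ along the characteristic
    have hcurve : HasDerivAt (fun s => (s, y s)) ((1 : ℝ), v (t, y t)) t :=
      (hasDerivAt_id t).prodMk (hy t)
    have hρd : HasDerivAt (fun s => ρ (s, y s))
        (fderiv ℝ ρ (t, y t) (1, v (t, y t))) t :=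
      ((hρ.differentiable one_ne_zero).differentiableAt.hasFDerivAt).comp_hasDerivAt t hcurve
    -- split the derivative of ρ
    have hsplit : fderiv ℝ ρ (t, y t) (1, v (t, y t)) =
        fderiv ℝ ρ (t, y t) (1, 0)
          + ⟪v (t, y t), gradient (fun x => ρ (t, x)) (y t)⟫ := by
      have hpart : HasFDerivAt (fun x => ρ (t, x))
          ((fderiv ℝ ρ (t, y t)).comp (ContinuousLinearMap.inr ℝ ℝ _)) (y t) :=
        ((hρ.differentiable one_ne_zero).differentiableAt.hasFDerivAt).comp (y t)
          (hasFDerivAt_prodMk_right t (y t))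
      have hgrad : ⟪v (t, y t), gradient (fun x => ρ (t, x)) (y t)⟫ =
          fderiv ℝ ρ (t, y t) (0, v (t, y t)) := by
        rw [real_inner_comm, gradient, hpart.fderiv]
        rw [InnerProductSpace.toDual_symm_apply]
        rfl
      rw [hgrad, ← map_add]
      norm_num
    -- derivative of det F
    have hdet : HasDerivAt (fun s => (F s).det) (J.trace * (F t).det) t := jacobi3 (hF t)
    -- trace equals the divergence sum
    have htrace : J.trace = ∑ i : Fin 3,
        ⟪(fderiv ℝ (fun x => v (t, x)) (y t)) (EuclideanSpace.single i 1),
          EuclideanSpace.single i 1⟫ := by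
      rw [Matrix.trace]
      congr 1
      ext i
      rw [EuclideanSpace.inner_single_right]
      simp [hJ, Matrix.diag]
    have hprod := hρd.mul hdet
    have hzero : fderiv ℝ ρ (t, y t) (1, v (t, y t)) * (F t).det
        + ρ (t, y t) * (J.trace * (F t).det) = 0 := by
      rw [hsplit, htrace]
      have h0 := heq t (y t)
      linear_combination (F t).det * h0
    rw [hg]
    exact hprod.congr_deriv hzero
  have hconst : ∀ t, g t = g 0 := by
    intro t
    exact is_const_of_deriv_eq_zero (fun s => (key s).differentiableAt)
      (fun s => (key s).deriv) t 0
  exact ⟨hconst, fun h1 t => (hconst t).trans h1⟩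
end

section
/- Let x : ℝ × E → E be twice continuously differentiable (ContDiff ℝ 2), E = EuclideanSpace ℝ (Fin 3), and let v : ℝ × E → E be such that v(t,·) is differentiable for each t. Suppose that for all (t, X), the function s ↦ x(s, X) has derivative v(t, x(t,X)) at s = t. Define the deformation gradient F(t,X) := fderiv ℝ (x (t, ·)) X ∈ E →L[ℝ] E. Then for every (t,X), the map t ↦ F(t,X) is differentiable in t with derivative (fderiv ℝ (v (t, ·)) (x(t,X))) ∘L F(t,X). (This is the derivation of the deformation-gradient equation ∂ₜF = ∇v F from the flow-map equation dx/dt = v(x(X,t),t), F = ∂x/∂X.) -/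
/-- Derivation of the deformation-gradient equation `∂ₜF = (∇v)F` from the flow-map
equation `dx/dt = v(t, x)`, where `F(t, X) = ∂x(t, X)/∂X`. -/
theorem deformation_gradient_evolution
    (x : ℝ × EuclideanSpace ℝ (Fin 3) → EuclideanSpace ℝ (Fin 3))
    (v : ℝ × EuclideanSpace ℝ (Fin 3) → EuclideanSpace ℝ (Fin 3))
    (hx : ContDiff ℝ 2 x)
    (hv : ∀ t, Differentiable ℝ (fun y => v (t, y)))
    (hflow : ∀ (t : ℝ) (X : EuclideanSpace ℝ (Fin 3)),
      HasDerivAt (fun s => x (s, X)) (v (t, x (t, X))) t) :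
    ∀ (t : ℝ) (X : EuclideanSpace ℝ (Fin 3)),
      HasDerivAt (fun s => fderiv ℝ (fun y => x (s, y)) X)
        ((fderiv ℝ (fun y => v (t, y)) (x (t, X))).comp
          (fderiv ℝ (fun y => x (t, y)) X)) t := by
  intro t X
  have hxd : Differentiable ℝ x := hx.differentiable (by norm_num)
  set D := fderiv ℝ x with hDdef
  have hD : ContDiff ℝ 1 D := hx.fderiv_right (by norm_num)
  have hDd : Differentiable ℝ D := hD.differentiable (by norm_num)
  set inr := ContinuousLinearMap.inr ℝ ℝ (EuclideanSpace ℝ (Fin 3)) with hinr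
  -- fderiv of the spatial slice
  have hslice : ∀ (s : ℝ) (Y : EuclideanSpace ℝ (Fin 3)),
      fderiv ℝ (fun y => x (s, y)) Y = (D (s, Y)).comp inr := by
    intro s Y
    have h1 : HasFDerivAt (fun y : EuclideanSpace ℝ (Fin 3) => x (s, y))
        ((D (s, Y)).comp inr) Y :=
      (hxd (s, Y)).hasFDerivAt.comp Y (hasFDerivAt_prodMk_right s Y)
    exact h1.fderiv
  set f'' := fderiv ℝ D (t, X) with hf''
  have hline : HasDerivAt (fun s : ℝ => (s, X)) ((1 : ℝ), (0 : EuclideanSpace ℝ (Fin 3))) t :=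
    (hasDerivAt_id t).prodMk (hasDerivAt_const t X)
  have hDt : HasDerivAt (fun s => D (s, X)) (f'' (1, 0)) t :=
    (hDd (t, X)).hasFDerivAt.comp_hasDerivAt t hline
  have hF : HasDerivAt (fun s => (D (s, X)).comp inr) ((f'' (1, 0)).comp inr) t := by
    have := hDt.clm_comp (hasDerivAt_const t inr)
    simpa using this
  have hsymm : ∀ a b, f'' a b = f'' b a :=
    second_derivative_symmetric (fun y => (hxd y).hasFDerivAt) (hDd (t, X)).hasFDerivAt
  have hkey : (f'' (1, 0)).comp inr =
      (fderiv ℝ (fun y => v (t, y)) (x (t, X))).comp (fderiv ℝ (fun y => x (t, y)) X) := by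
    refine ContinuousLinearMap.ext fun Y => ?_
    have hg : HasFDerivAt (fun Y' : EuclideanSpace ℝ (Fin 3) => D (t, Y')) (f''.comp inr) X :=
      (hDd (t, X)).hasFDerivAt.comp X (hasFDerivAt_prodMk_right t X)
    have hh : HasFDerivAt (fun Y' : EuclideanSpace ℝ (Fin 3) => D (t, Y') (1, 0))
        ((ContinuousLinearMap.apply ℝ (EuclideanSpace ℝ (Fin 3))
          ((1 : ℝ), (0 : EuclideanSpace ℝ (Fin 3)))).comp (f''.comp inr)) X :=
      (ContinuousLinearMap.apply ℝ (EuclideanSpace ℝ (Fin 3))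
        ((1 : ℝ), (0 : EuclideanSpace ℝ (Fin 3)))).hasFDerivAt.comp X hg
    have hDv : ∀ Y' : EuclideanSpace ℝ (Fin 3), D (t, Y') (1, 0) = v (t, x (t, Y')) := by
      intro Y'
      have h1 : HasDerivAt (fun s => x (s, Y')) (D (t, Y') (1, 0)) t :=
        (hxd (t, Y')).hasFDerivAt.comp_hasDerivAt t
          ((hasDerivAt_id t).prodMk (hasDerivAt_const t Y'))
      exact h1.unique (hflow t Y')
    have hx2 : DifferentiableAt ℝ (fun y : EuclideanSpace ℝ (Fin 3) => x (t, y)) X :=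
      (hxd (t, X)).comp X ((differentiableAt_const t).prodMk differentiableAt_fun_id)
    have hh2 : HasFDerivAt (fun Y' : EuclideanSpace ℝ (Fin 3) => v (t, x (t, Y')))
        ((fderiv ℝ (fun y => v (t, y)) (x (t, X))).comp (fderiv ℝ (fun y => x (t, y)) X)) X := by
      have := (hv t (x (t, X))).hasFDerivAt.comp X hx2.hasFDerivAt
      exact this
    have heq : (fun Y' : EuclideanSpace ℝ (Fin 3) => D (t, Y') (1, 0))
        = fun Y' : EuclideanSpace ℝ (Fin 3) => v (t, x (t, Y')) := funext hDv
    have huniq :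
        (ContinuousLinearMap.apply ℝ (EuclideanSpace ℝ (Fin 3))
          ((1 : ℝ), (0 : EuclideanSpace ℝ (Fin 3)))).comp (f''.comp inr) =
        (fderiv ℝ (fun y => v (t, y)) (x (t, X))).comp (fderiv ℝ (fun y => x (t, y)) X) := by
      have h := hh
      rw [heq] at h
      exact h.unique hh2
    have h2 := congrArg (fun L : EuclideanSpace ℝ (Fin 3) →L[ℝ] EuclideanSpace ℝ (Fin 3) => L Y) huniq
    simp only [ContinuousLinearMap.comp_apply, ContinuousLinearMap.apply_apply] at h2 ⊢
    rw [← h2]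
    exact hsymm (1, 0) (inr Y)
  rw [← hkey]
  have hfun : (fun s => fderiv ℝ (fun y => x (s, y)) X) = fun s => (D (s, X)).comp inr :=
    funext fun s => hslice s X
  rw [hfun]
  exact hF
end

section
/- Let μ, ξ, c_p ∈ ℝ with μ > 0, μ + ξ > 0, and c_p > 0. Then there exist ε > 0 and δ ∈ (0,1) such that the symmetric real 3×3 matrix !![ε*μ + δ*μ − δ*c_p/μ, 0, −(1+δ)/2; 0, (ε+δ)*(μ+ξ), −δ*(μ+ξ)/(2*μ); −(1+δ)/2, −δ*(μ+ξ)/(2*μ), δ/μ] is positive definite. (This is the positivity of the leading 3×3 block 𝓜₃ of the matrix 𝓜 in Lemma 6.1 (Lmm-Glob-ED), achieved by choosing ε large and δ small with ε·δ large; it yields the coercivity of the quadratic form coupling ‖∇u‖, ‖∇·u‖ and ‖∇ψ‖ in the instant dissipation rate.) -/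
lemma dissipation_aux (μ m c_p a b c : ℝ) (hμ : 0 < μ) (hm : 0 < m) (hcp : 0 < c_p)
    (h : a ≠ 0 ∨ b ≠ 0 ∨ c ≠ 0) :
    0 < (25*μ^3 + μ^2*m) * a^2 + (c_p + 25*μ^2 + μ*m)*m * b^2 + μ * c^2
        - 3*μ^2*a*c - μ*m*b*c := by
  have hsq1 : (0:ℝ) ≤ μ * (10*μ*a - 3*c)^2 := by positivity
  have hsq2 : (0:ℝ) ≤ μ * (2*m*b - c)^2 := by positivity
  have h4 : (0:ℝ) ≤ (c_p + 25*μ^2)*m*b^2 := by positivity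
  have h5 : (0:ℝ) ≤ μ^2*m*a^2 := by positivity
  have h6 : (0:ℝ) ≤ μ*c^2 := by positivity
  have h3 : (0:ℝ) ≤ μ^3*a^2 := by positivity
  rcases h with h | h | h
  · have ha : (0:ℝ) < μ^3*a^2 := by positivity
    nlinarith [hsq1, hsq2, ha, h4, h5, h6]
  · have hb : (0:ℝ) < (c_p + 25*μ^2)*m*b^2 := by positivity
    nlinarith [hsq1, hsq2, hb, h3, h5, h6]
  · have hc : (0:ℝ) < μ*c^2 := by positivity
    nlinarith [hsq1, hsq2, hc, h3, h4, h5]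

/-- Positivity of the leading 3×3 block of the dissipation matrix `𝓜` in the
global energy estimate: for `μ > 0`, `μ + ξ > 0`, `c_p > 0` there exist `ε > 0`
and `δ ∈ (0,1)` making the block positive definite. -/
theorem dissipation_block_posdef (μ ξ c_p : ℝ)
    (hμ : 0 < μ) (hμξ : 0 < μ + ξ) (hcp : 0 < c_p) :
    ∃ ε > (0:ℝ), ∃ δ ∈ Set.Ioo (0:ℝ) 1,
      (!![ε * μ + δ * μ - δ * c_p / μ, 0, -(1 + δ) / 2;
          0, (ε + δ) * (μ + ξ), -δ * (μ + ξ) / (2 * μ);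
          -(1 + δ) / 2, -δ * (μ + ξ) / (2 * μ), δ / μ]).PosDef := by
  set ε : ℝ := (c_p + 24*μ^2 + μ*(μ+ξ))/(2*μ^2) with hεdef
  have hμ' : μ ≠ 0 := ne_of_gt hμ
  refine ⟨ε, by positivity, 1/2, ⟨by norm_num, by norm_num⟩, Matrix.PosDef.of_dotProduct_mulVec_pos ?_ ?_⟩
  · ext i j
    fin_cases i <;> fin_cases j <;> simp [Matrix.conjTranspose_apply]
  · intro x hx
    have h : x 0 ≠ 0 ∨ x 1 ≠ 0 ∨ x 2 ≠ 0 := by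
      by_contra h
      push_neg at h
      exact hx (funext fun i => by fin_cases i <;> simp [h.1, h.2.1, h.2.2])
    simp only [star_trivial, dotProduct, Matrix.mulVec, Fin.sum_univ_three]
    simp [Matrix.cons_val_zero, Matrix.cons_val_one]
    set a := x 0; set b := x 1; set c := x 2
    have key := dissipation_aux μ (μ+ξ) c_p a b c hμ hμξ hcp h
    have hP : 2*μ^2 * (a * ((ε * μ + 2⁻¹ * μ - 2⁻¹ * c_p / μ) * a + (-2⁻¹ + -1) / 2 * c) +
        b * ((ε + 2⁻¹) * (μ + ξ) * b + -(2⁻¹ * (μ + ξ)) / (2 * μ) * c) +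
        c * ((-2⁻¹ + -1) / 2 * a + -(2⁻¹ * (μ + ξ)) / (2 * μ) * b + 2⁻¹ / μ * c)) =
        (25*μ^3 + μ^2*(μ+ξ)) * a^2 + (c_p + 25*μ^2 + μ*(μ+ξ))*(μ+ξ) * b^2 + μ * c^2
          - 3*μ^2*a*c - μ*(μ+ξ)*b*c := by
      rw [hεdef]
      field_simp
      ring
    rw [← hP] at key
    rcases mul_pos_iff.mp key with ⟨_, hpos⟩ | ⟨hneg, _⟩
    · exact hpos
    · nlinarith [sq_nonneg μ]
end

section
/- Let s be a natural number with s ≥ 1, let C > 0, and let E, D : ℝ → ℝ be such that E is differentiable on ℝ, E t ≥ 0 and D t ≥ 0 for all t ≥ 0. Assume the differential inequality (1/2) · deriv E t + D t ≤ C · (1 + (E t)^(s/2)) · Real.sqrt (E t) · D t holds for all t ≥ 0 (with (E t)^(s/2) the real power), and assume the smallness condition C · (1 + (E 0)^(s/2)) · Real.sqrt (E 0) ≤ 1/4. Then E t ≤ E 0 for all t ≥ 0. (This is the bootstrap/continuity argument by which Theorem 1.2 (global well-posedness for small data) is deduced from the global energy estimate (1/2) d𝔼/dt + 𝔻 ≤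 C(1 + 𝔼^{s/2})𝔼^{1/2}𝔻 of Proposition 4.2.) -/
/-! Since the weight `w(x) = C (1 + x^{s/2}) √x` is continuous and `w(E 0) ≤ 1/4`, it stays
below `1/2` on some interval `[E 0, M)`. While `E` lies there the energy inequality gives
`E' ≤ -D ≤ 0`, so `E` can never climb above `E 0`. -/

open Set Filter Topology

/-- Compare `f` with the barriers `f a + ε (x - a)`, which stay below `M` on `[a, t]` for
small `ε`, and let `ε → 0`. -/
theorem le_of_deriv_nonpos_of_mem_Ico {f : ℝ → ℝ} (hf : Differentiable ℝ f) {a M : ℝ}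
    (haM : f a < M) (hderiv : ∀ x ≥ a, f x ∈ Ico (f a) M → deriv f x ≤ 0)
    {t : ℝ} (ht : a ≤ t) : f t ≤ f a := by
  have fence : ∀ ε > 0, ε * (t - a) < M - f a → f t ≤ f a + ε * (t - a) := by
    intro ε hε hεM
    refine image_le_of_deriv_right_lt_deriv_boundary (B := fun x => f a + ε * (x - a))
      (B' := fun _ => ε) hf.continuous.continuousOn
      (fun x _ => (hf x).hasDerivAt.hasDerivWithinAt) (by simp)
      (fun x => by simpa using (((hasDerivAt_id x).sub_const a).const_mul ε).const_add (f a))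
      ?_ ⟨ht, le_rfl⟩
    intro x hx hfx
    have hεx : ε * (x - a) ≤ ε * (t - a) := by gcongr; exact hx.2.le
    have hmem : f x ∈ Ico (f a) M := by
      rw [hfx]
      constructor <;> nlinarith [hx.1]
    exact (hderiv x hx.1 hmem).trans_lt hε
  have hδ : 0 < (M - f a) / (t - a + 1) := div_pos (by linarith) (by linarith)
  have hlim : Tendsto (fun ε => f a + ε * (t - a)) (𝓝[>] 0) (𝓝 (f a)) := by
    have : Continuous fun ε : ℝ => f a + ε * (t - a) := by fun_prop
    simpa using (this.tendsto 0).mono_left nhdsWithin_le_nhds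
  refine ge_of_tendsto hlim ?_
  filter_upwards [Ioo_mem_nhdsGT hδ] with ε ⟨hε, hεδ⟩
  refine fence ε hε ?_
  calc ε * (t - a) ≤ ε * (t - a + 1) := by nlinarith
    _ < (M - f a) / (t - a + 1) * (t - a + 1) := by gcongr
    _ = M - f a := div_mul_cancel₀ _ (by linarith)

theorem energy_bootstrap_general (s : ℕ) (C : ℝ)
    (E D : ℝ → ℝ) (hE : Differentiable ℝ E)
    (hDnn : ∀ t ≥ (0:ℝ), 0 ≤ D t)
    (hineq : ∀ t ≥ (0:ℝ),
      (1 / 2) * deriv E t + D t ≤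
        C * (1 + (E t) ^ ((s : ℝ) / 2)) * Real.sqrt (E t) * D t)
    (hsmall : C * (1 + (E 0) ^ ((s : ℝ) / 2)) * Real.sqrt (E 0) ≤ 1 / 4) :
    ∀ t ≥ (0:ℝ), E t ≤ E 0 := by
  set w : ℝ → ℝ := fun x => C * (1 + x ^ ((s : ℝ) / 2)) * Real.sqrt x
  have hw : Continuous w := by
    have := Real.continuous_rpow_const (q := (s : ℝ) / 2) (by positivity)
    fun_prop
  have hw_small : w ⁻¹' Iio (1 / 2) ∈ 𝓝 (E 0) :=
    hw.continuousAt.preimage_mem_nhds (Iio_mem_nhds (by linarith))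
  obtain ⟨M, hM, hIco⟩ := exists_Ico_subset_of_mem_nhds hw_small ⟨E 0 + 1, by linarith⟩
  intro t ht
  refine le_of_deriv_nonpos_of_mem_Ico hE hM (fun x hx hEx => ?_) ht
  have hwD : w (E x) * D x ≤ 1 / 2 * D x :=
    mul_le_mul_of_nonneg_right (hIco hEx : w (E x) < 1 / 2).le (hDnn x hx)
  linarith [hineq x hx, hDnn x hx]

/-- Bootstrap argument for global well-posedness: if the energy `E` and dissipation `D`
satisfy `(1/2)E' + D ≤ C(1 + E^{s/2})√E · D` for `t ≥ 0` and the initial smallness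
`C(1 + E(0)^{s/2})√(E 0) ≤ 1/4`, then `E t ≤ E 0` for all `t ≥ 0`. -/
theorem energy_bootstrap (s : ℕ) (hs : 1 ≤ s) (C : ℝ) (hC : 0 < C)
    (E D : ℝ → ℝ) (hE : Differentiable ℝ E)
    (hEnn : ∀ t ≥ (0:ℝ), 0 ≤ E t) (hDnn : ∀ t ≥ (0:ℝ), 0 ≤ D t)
    (hineq : ∀ t ≥ (0:ℝ),
      (1 / 2) * deriv E t + D t ≤
        C * (1 + (E t) ^ ((s : ℝ) / 2)) * Real.sqrt (E t) * D t)
    (hsmall : C * (1 + (E 0) ^ ((s : ℝ) / 2)) * Real.sqrt (E 0) ≤ 1 / 4) :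
    ∀ t ≥ (0:ℝ), E t ≤ E 0 :=
  energy_bootstrap_general s C E D hE hDnn hineq hsmall
end
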